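/- arXiv:2508.13422 — 2 statements merged into one kernel-verified Lean document; each statement's English description precedes it below -/
import Mathlib

section
/- Let S^u = F_{X_1}^{-1}(U) + F_{X_2}^{-1}(U) (comonotonic sum) and S^l = F_{X_1}^{-1}(U) + F_{X_2}^{-1}(1-U) (counter-monotonic sum), with g nondecreasing and F_{S^l} continuous at F_{S^l}^{-1}(p). Then TVaR_p[S^u] - TVaR_p[S^l] = TVaR_p[X_2] - LTVaR_{1-p}[X_2], i.e. the dependence uncertainty spread depends only on X_2. -/
open MeasureTheory

open Set ProbabilityTheory Filter Topology

/-- Galois connection for the left-continuous quantile of a probability measure on ℝ. -/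
lemma galois_aux (ν : Measure ℝ) [IsProbabilityMeasure ν] {F Q : ℝ → ℝ}
    (hF : ∀ y, F y = (ν (Set.Iic y)).toReal)
    (hQ : ∀ q, Q q = sInf {x : ℝ | q ≤ F x})
    {q : ℝ} (hq0 : 0 < q) (hex : ∃ y, q ≤ F y) :
    ∀ y, Q q ≤ y ↔ q ≤ F y := by
  have hFc : ∀ y, F y = cdf ν y := fun y => by rw [hF, cdf_eq_real, measureReal_def]
  have hmono : Monotone F := by
    intro a b hab; rw [hFc, hFc]; exact monotone_cdf (μ := ν) hab
  -- lower bound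
  obtain ⟨z, hz⟩ : ∃ z, F z < q := by
    have := (tendsto_cdf_atBot (μ := ν)).eventually_lt_const hq0
    rcases this.exists with ⟨z, hz⟩
    exact ⟨z, by rw [hFc]; exact hz⟩
  have hbdd : BddBelow {x : ℝ | q ≤ F x} := by
    refine ⟨z, fun x hx => ?_⟩
    by_contra hlt
    push_neg at hlt
    exact absurd (le_trans hx (hmono hlt.le)) (not_le.2 hz)
  intro y
  constructor
  · intro h
    have key : ∀ x, y < x → q ≤ F x := by
      intro x hx
      have : sInf {x : ℝ | q ≤ F x} < x := lt_of_le_of_lt (hQ q ▸ h) hx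
      obtain ⟨s, hs, hsx⟩ := (csInf_lt_iff hbdd hex).1 this
      exact le_trans hs (hmono hsx.le)
    have hrc : Tendsto F (𝓝[>] y) (𝓝 (F y)) := by
      have := ((cdf ν).right_continuous y).tendsto
      have h2 : Tendsto (cdf ν) (𝓝[>] y) (𝓝 (cdf ν y)) :=
        this.mono_left (nhdsWithin_mono y Ioi_subset_Ici_self)
      have : F = fun y => cdf ν y := funext hFc
      rw [this]; exact h2
    exact ge_of_tendsto hrc (eventually_nhdsWithin_of_forall (fun x hx => key x hx))
  · intro h
    rw [hQ]
    exact csInf_le hbdd h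

/-- A function monotone on `Ioo 0 1` is a.e. measurable for the restricted measure. -/
lemma monoOn_aemeasurable {h : ℝ → ℝ} (hm : MonotoneOn h (Set.Ioo 0 1)) :
    AEMeasurable h (volume.restrict (Set.Ioo (0:ℝ) 1)) := by
  classical
  set H : ℝ → ℝ := fun u => if u ∈ Set.Ioo (0:ℝ) 1 then h u else 0 with hH
  have hHmeas : Measurable H := by
    apply measurable_of_Iic
    intro y
    have h1 : MeasurableSet {u : ℝ | u ∈ Set.Ioo (0:ℝ) 1 ∧ h u ≤ y} := by
      apply Set.OrdConnected.measurableSet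
      constructor
      intro a ha b hb w hw
      have hwI : w ∈ Set.Ioo (0:ℝ) 1 := (Set.ordConnected_Ioo).out ha.1 hb.1 hw
      exact ⟨hwI, le_trans (hm hwI hb.1 hw.2) hb.2⟩
    by_cases hy : (0:ℝ) ≤ y
    · have : H ⁻¹' Set.Iic y =
          {u : ℝ | u ∈ Set.Ioo (0:ℝ) 1 ∧ h u ≤ y} ∪ (Set.Ioo (0:ℝ) 1)ᶜ := by
        ext u
        simp only [Set.mem_preimage, Set.mem_Iic, Set.mem_union, Set.mem_setOf_eq,
          Set.mem_compl_iff, hH]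
        by_cases hu : u ∈ Set.Ioo (0:ℝ) 1 <;> simp [hu, hy]
      rw [this]
      exact h1.union measurableSet_Ioo.compl
    · have : H ⁻¹' Set.Iic y = {u : ℝ | u ∈ Set.Ioo (0:ℝ) 1 ∧ h u ≤ y} := by
        ext u
        simp only [Set.mem_preimage, Set.mem_Iic, Set.mem_setOf_eq, hH]
        by_cases hu : u ∈ Set.Ioo (0:ℝ) 1 <;> simp [hu, hy]
      rw [this]; exact h1
  refine ⟨H, hHmeas, ?_⟩
  rw [Filter.EventuallyEq, ae_restrict_iff' measurableSet_Ioo]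
  filter_upwards with u hu
  simp [hH, hu.1, hu.2]

lemma quantile_exists_le (ν : Measure ℝ) [IsProbabilityMeasure ν] {F : ℝ → ℝ}
    (hF : ∀ y, F y = (ν (Set.Iic y)).toReal) {q : ℝ} (hq : q < 1) :
    ∃ y, q ≤ F y := by
  have hFc : ∀ y, F y = cdf ν y := fun y => by rw [hF, cdf_eq_real, measureReal_def]
  have := (tendsto_cdf_atTop (μ := ν)).eventually_const_lt hq
  rcases this.exists with ⟨y, hy⟩
  exact ⟨y, by rw [hFc]; exact hy.le⟩

lemma quantile_bddBelow (ν : Measure ℝ) [IsProbabilityMeasure ν] {F : ℝ → ℝ}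
    (hF : ∀ y, F y = (ν (Set.Iic y)).toReal) {q : ℝ} (hq : 0 < q) :
    BddBelow {x : ℝ | q ≤ F x} := by
  have hFc : ∀ y, F y = cdf ν y := fun y => by rw [hF, cdf_eq_real, measureReal_def]
  have hmono : Monotone F := by
    intro a b hab; rw [hFc, hFc]; exact monotone_cdf (μ := ν) hab
  obtain ⟨z, hz⟩ : ∃ z, F z < q := by
    have := (tendsto_cdf_atBot (μ := ν)).eventually_lt_const hq
    rcases this.exists with ⟨z, hz⟩
    exact ⟨z, by rw [hFc]; exact hz⟩
  refine ⟨z, fun x hx => ?_⟩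
  by_contra hlt
  push_neg at hlt
  exact absurd (le_trans hx (hmono hlt.le)) (not_le.2 hz)

lemma quantile_monoOn (ν : Measure ℝ) [IsProbabilityMeasure ν] {F Q : ℝ → ℝ}
    (hF : ∀ y, F y = (ν (Set.Iic y)).toReal)
    (hQ : ∀ q, Q q = sInf {x : ℝ | q ≤ F x}) :
    MonotoneOn Q (Set.Ioo 0 1) := by
  intro a ha b hb hab
  rw [hQ, hQ]
  refine csInf_le_csInf (quantile_bddBelow ν hF ha.1) ?_ ?_
  · exact quantile_exists_le ν hF hb.2
  · intro x hx; exact le_trans hab hx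

/-- Quantile transform: the pushforward of the uniform distribution on `(0,1)` under the
quantile function of `ν` is `ν` itself. -/
lemma quantile_map (ν : Measure ℝ) [IsProbabilityMeasure ν] {F Q : ℝ → ℝ}
    (hF : ∀ y, F y = (ν (Set.Iic y)).toReal)
    (hQ : ∀ q, Q q = sInf {x : ℝ | q ≤ F x}) :
    Measure.map Q (volume.restrict (Set.Ioo (0:ℝ) 1)) = ν := by
  have hQmeas := monoOn_aemeasurable (quantile_monoOn ν hF hQ)
  have hFc : ∀ y, F y = cdf ν y := fun y => by rw [hF, cdf_eq_real, measureReal_def]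
  have hF0 : ∀ y, 0 ≤ F y := fun y => by rw [hFc]; exact cdf_nonneg ν y
  have hF1 : ∀ y, F y ≤ 1 := fun y => by rw [hFc]; exact cdf_le_one ν y
  have gal : ∀ q ∈ Set.Ioo (0:ℝ) 1, ∀ y, Q q ≤ y ↔ q ≤ F y := fun q hq =>
    galois_aux ν hF hQ hq.1 (quantile_exists_le ν hF hq.2)
  refine Measure.ext_of_Iic _ _ (fun y => ?_)
  rw [Measure.map_apply_of_aemeasurable hQmeas measurableSet_Iic,
    Measure.restrict_apply' measurableSet_Ioo]
  have hset : Q ⁻¹' Set.Iic y ∩ Set.Ioo 0 1 = Set.Iic (F y) ∩ Set.Ioo 0 1 := by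
    ext u
    simp only [Set.mem_inter_iff, Set.mem_preimage, Set.mem_Iic]
    constructor
    · rintro ⟨h1, h2⟩; exact ⟨(gal u h2 y).1 h1, h2⟩
    · rintro ⟨h1, h2⟩; exact ⟨(gal u h2 y).2 h1, h2⟩
  rw [hset]
  have hvol : volume (Set.Iic (F y) ∩ Set.Ioo 0 1) = ENNReal.ofReal (F y) := by
    rcases lt_or_eq_of_le (hF1 y) with hlt | heq
    · have : Set.Iic (F y) ∩ Set.Ioo 0 1 = Set.Ioc 0 (F y) := by
        ext u
        simp only [Set.mem_inter_iff, Set.mem_Iic, Set.mem_Ioo, Set.mem_Ioc]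
        constructor
        · rintro ⟨h1, h2, _⟩; exact ⟨h2, h1⟩
        · rintro ⟨h1, h2⟩; exact ⟨h2, h1, lt_of_le_of_lt h2 hlt⟩
      rw [this, Real.volume_Ioc, sub_zero]
    · have : Set.Iic (F y) ∩ Set.Ioo 0 1 = Set.Ioo 0 1 := by
        ext u
        simp only [Set.mem_inter_iff, Set.mem_Iic, Set.mem_Ioo]
        exact ⟨fun h => h.2, fun h => ⟨heq ▸ h.2.le, h⟩⟩
      rw [this, Real.volume_Ioo, sub_zero, ← heq]
  rw [hvol, hF y, ENNReal.ofReal_toReal (measure_ne_top ν _)]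

/-- The quantile function of the pushforward of the uniform distribution on `(0,1)`
under a monotone map `h` agrees with `h` off a countable set. -/
lemma quantile_pushforward_ae {h F Q : ℝ → ℝ} (hm : MonotoneOn h (Set.Ioo 0 1))
    (hF : ∀ y, F y =
      ((Measure.map h (volume.restrict (Set.Ioo (0:ℝ) 1))) (Set.Iic y)).toReal)
    (hQ : ∀ q, Q q = sInf {x : ℝ | q ≤ F x}) :
    volume {q : ℝ | q ∈ Set.Ioo (0:ℝ) 1 ∧ Q q ≠ h q} = 0 := by
  classical
  have hmeas := monoOn_aemeasurable hm
  haveI : IsProbabilityMeasure (volume.restrict (Set.Ioo (0:ℝ) 1)) := by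
    constructor; simp [Real.volume_Ioo]
  set ν := Measure.map h (volume.restrict (Set.Ioo (0:ℝ) 1)) with hν
  haveI : IsProbabilityMeasure ν := Measure.isProbabilityMeasure_map hmeas
  have key : ∀ y, ν (Set.Iic y) = volume (h ⁻¹' Set.Iic y ∩ Set.Ioo 0 1) := by
    intro y
    rw [hν, Measure.map_apply_of_aemeasurable hmeas measurableSet_Iic,
      Measure.restrict_apply' measurableSet_Ioo]
  -- F (h t) ≥ t for t ∈ (0,1)
  have claim1 : ∀ t ∈ Set.Ioo (0:ℝ) 1, t ≤ F (h t) := by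
    intro t ht
    rw [hF, key]
    have hsub : Set.Ioo (0:ℝ) t ⊆ h ⁻¹' Set.Iic (h t) ∩ Set.Ioo 0 1 := by
      intro u hu
      have huI : u ∈ Set.Ioo (0:ℝ) 1 := ⟨hu.1, lt_trans hu.2 ht.2⟩
      exact ⟨hm huI ht hu.2.le, huI⟩
    calc t = (ENNReal.ofReal t).toReal := by rw [ENNReal.toReal_ofReal ht.1.le]
      _ = (volume (Set.Ioo (0:ℝ) t)).toReal := by rw [Real.volume_Ioo, sub_zero]
      _ ≤ (volume (h ⁻¹' Set.Iic (h t) ∩ Set.Ioo 0 1)).toReal := by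
          apply ENNReal.toReal_mono _ (measure_mono hsub)
          rw [← key]; exact measure_ne_top ν _
  have gal : ∀ q ∈ Set.Ioo (0:ℝ) 1, ∀ y, Q q ≤ y ↔ q ≤ F y := by
    intro q hq
    exact galois_aux ν hF hQ hq.1 ⟨h q, claim1 q hq⟩
  have claim2 : ∀ q ∈ Set.Ioo (0:ℝ) 1, Q q ≤ h q := by
    intro q hq
    exact (gal q hq (h q)).2 (claim1 q hq)
  have claim3 : ∀ q' ∈ Set.Ioo (0:ℝ) 1, ∀ q ∈ Set.Ioo (0:ℝ) 1, q' < q → h q' ≤ Q q := by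
    intro q' hq' q hq hlt
    by_contra hcon
    push_neg at hcon
    have hqF : q ≤ F (Q q) := (gal q hq (Q q)).1 le_rfl
    have hsub : h ⁻¹' Set.Iic (Q q) ∩ Set.Ioo 0 1 ⊆ Set.Ioo (0:ℝ) q' := by
      intro u hu
      refine ⟨hu.2.1, ?_⟩
      by_contra hge
      push_neg at hge
      exact absurd (le_trans (hm hq' hu.2 hge) hu.1) (not_le.2 hcon)
    have : F (Q q) ≤ q' := by
      rw [hF, key]
      calc (volume (h ⁻¹' Set.Iic (Q q) ∩ Set.Ioo 0 1)).toReal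
          ≤ (volume (Set.Ioo (0:ℝ) q')).toReal := by
            apply ENNReal.toReal_mono _ (measure_mono hsub)
            simp [Real.volume_Ioo]
        _ = q' := by rw [Real.volume_Ioo, sub_zero, ENNReal.toReal_ofReal hq'.1.le]
    exact absurd (le_trans hqF this) (not_le.2 hlt)
  -- the bad set is countable
  set B := {q : ℝ | q ∈ Set.Ioo (0:ℝ) 1 ∧ Q q ≠ h q} with hB
  have hlt : ∀ q ∈ B, Q q < h q := fun q hq => lt_of_le_of_ne (claim2 q hq.1) hq.2
  have hr : ∀ q ∈ B, ∃ r : ℚ, Q q < (r : ℝ) ∧ (r : ℝ) < h q := fun q hq =>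
    exists_rat_btwn (hlt q hq)
  choose! r hr1 hr2 using hr
  have hinj : Set.InjOn r B := by
    intro a ha b hb hab
    by_contra hne
    rcases lt_or_gt_of_ne hne with hl | hl
    · have : (r a : ℝ) < r b :=
        lt_of_lt_of_le (hr2 a ha) (le_trans (claim3 a ha.1 b hb.1 hl) (hr1 b hb).le)
      rw [hab] at this; exact lt_irrefl _ this
    · have : (r b : ℝ) < r a :=
        lt_of_lt_of_le (hr2 b hb) (le_trans (claim3 b hb.1 a ha.1 hl) (hr1 a ha).le)
      rw [hab] at this; exact lt_irrefl _ this
  have hcount : B.Countable :=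
    Set.countable_of_injective_of_countable_image hinj (Set.to_countable _)
  exact hcount.measure_zero _

lemma cdf_of_rv {Ω : Type*} [MeasurableSpace Ω] (μ : Measure Ω) [IsProbabilityMeasure μ]
    {X : Ω → ℝ} (hX : AEMeasurable X μ) {F : ℝ → ℝ}
    (hF : ∀ y, F y = (μ {ω | X ω ≤ y}).toReal) :
    ∀ y, F y = ((Measure.map X μ) (Set.Iic y)).toReal := by
  intro y
  rw [hF, Measure.map_apply_of_aemeasurable hX measurableSet_Iic]
  rfl

lemma quantile_integrableOn {Ω : Type*} [MeasurableSpace Ω] (μ : Measure Ω)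
    [IsProbabilityMeasure μ] {X : Ω → ℝ} (hX : Integrable X μ) {F Q : ℝ → ℝ}
    (hF : ∀ y, F y = (μ {ω | X ω ≤ y}).toReal)
    (hQ : ∀ q, Q q = sInf {x : ℝ | q ≤ F x}) :
    IntegrableOn Q (Set.Ioo (0:ℝ) 1) volume := by
  set ν := Measure.map X μ with hν
  haveI : IsProbabilityMeasure ν := Measure.isProbabilityMeasure_map hX.aemeasurable
  have hFν := cdf_of_rv μ hX.aemeasurable hF
  have hQmeas := monoOn_aemeasurable (quantile_monoOn ν hFν hQ)
  have hmap := quantile_map ν hFν hQ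
  have hid : Integrable (id : ℝ → ℝ) ν := by
    rw [hν, integrable_map_measure aestronglyMeasurable_id hX.aemeasurable]
    exact hX
  rw [← hmap, integrable_map_measure aestronglyMeasurable_id hQmeas] at hid
  exact hid

/-- Dependence uncertainty spread: with `g` nondecreasing and `F_{Sˡ}` continuous at
`F_{Sˡ}⁻¹(p)`, `TVaR_p[Sᵘ] - TVaR_p[Sˡ] = TVaR_p[X₂] - LTVaR_{1-p}[X₂]`. -/
theorem dependence_uncertainty_spread {Ω₁ Ω₂ : Type*}
    [MeasurableSpace Ω₁] [MeasurableSpace Ω₂]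
    (μ₁ : Measure Ω₁) (μ₂ : Measure Ω₂)
    [IsProbabilityMeasure μ₁] [IsProbabilityMeasure μ₂]
    (X₁ : Ω₁ → ℝ) (hX₁ : Integrable X₁ μ₁)
    (X₂ : Ω₂ → ℝ) (hX₂ : Integrable X₂ μ₂)
    (F₁ F₂ Q₁ Q₂ : ℝ → ℝ)
    (hF₁ : ∀ y, F₁ y = (μ₁ {ω | X₁ ω ≤ y}).toReal)
    (hF₂ : ∀ y, F₂ y = (μ₂ {ω | X₂ ω ≤ y}).toReal)
    (hQ₁ : ∀ p, Q₁ p = sInf {x : ℝ | p ≤ F₁ x})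
    (hQ₂ : ∀ p, Q₂ p = sInf {x : ℝ | p ≤ F₂ x})
    (f g : ℝ → ℝ)
    (hf : ∀ u, f u = Q₁ u + Q₂ u)
    (hg : ∀ u, g u = Q₁ u + Q₂ (1 - u))
    (hmono : MonotoneOn g (Set.Ioo (0:ℝ) 1))
    (FSu QSu FSl QSl : ℝ → ℝ)
    (hFSu : ∀ y, FSu y =
      ((Measure.map f (volume.restrict (Set.Ioo (0:ℝ) 1))) (Set.Iic y)).toReal)
    (hQSu : ∀ q, QSu q = sInf {x : ℝ | q ≤ FSu x})
    (hFSl : ∀ y, FSl y =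
      ((Measure.map g (volume.restrict (Set.Ioo (0:ℝ) 1))) (Set.Iic y)).toReal)
    (hQSl : ∀ q, QSl q = sInf {x : ℝ | q ≤ FSl x})
    (p : ℝ) (hp : p ∈ Set.Ioo (0:ℝ) 1)
    (hcont : ContinuousAt FSl (QSl p)) :
    (1 / (1 - p)) * ∫ q in p..1, QSu q - (1 / (1 - p)) * ∫ q in p..1, QSl q =
      (1 / (1 - p)) * ∫ q in p..1, Q₂ q -
        (1 / (1 - p)) * ∫ q in (0:ℝ)..(1 - p), Q₂ q := by
  haveI : IsProbabilityMeasure (Measure.map X₁ μ₁) :=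
    Measure.isProbabilityMeasure_map hX₁.aemeasurable
  haveI : IsProbabilityMeasure (Measure.map X₂ μ₂) :=
    Measure.isProbabilityMeasure_map hX₂.aemeasurable
  have hF₁ν := cdf_of_rv μ₁ hX₁.aemeasurable hF₁
  have hF₂ν := cdf_of_rv μ₂ hX₂.aemeasurable hF₂
  have hQ₁mono := quantile_monoOn (Measure.map X₁ μ₁) hF₁ν hQ₁
  have hQ₂mono := quantile_monoOn (Measure.map X₂ μ₂) hF₂ν hQ₂
  have hfmono : MonotoneOn f (Set.Ioo (0:ℝ) 1) := by
    intro a ha b hb hab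
    rw [hf, hf]
    exact add_le_add (hQ₁mono ha hb hab) (hQ₂mono ha hb hab)
  have aeu := quantile_pushforward_ae hfmono hFSu hQSu
  have ael := quantile_pushforward_ae hmono hFSl hQSl
  -- integrability
  have Int1 := quantile_integrableOn μ₁ hX₁ hF₁ hQ₁
  have Int2 := quantile_integrableOn μ₂ hX₂ hF₂ hQ₂
  have I1 : IntervalIntegrable Q₁ volume p 1 := by
    rw [intervalIntegrable_iff_integrableOn_Ioo_of_le hp.2.le]
    exact Int1.mono_set (Set.Ioo_subset_Ioo hp.1.le le_rfl)
  have I2 : IntervalIntegrable Q₂ volume p 1 := by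
    rw [intervalIntegrable_iff_integrableOn_Ioo_of_le hp.2.le]
    exact Int2.mono_set (Set.Ioo_subset_Ioo hp.1.le le_rfl)
  have I20 : IntervalIntegrable Q₂ volume 0 (1 - p) := by
    rw [intervalIntegrable_iff_integrableOn_Ioo_of_le (by linarith [hp.2] : (0:ℝ) ≤ 1 - p)]
    exact Int2.mono_set (Set.Ioo_subset_Ioo le_rfl (by linarith [hp.1]))
  have I2' : IntervalIntegrable (fun q => Q₂ (1 - q)) volume p 1 := by
    have := (I20.comp_sub_left 1).symm
    simpa using this
  have hne : (1:ℝ) - p ≠ 0 := by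
    have := hp.2; intro h; linarith
  have hfeq : f = fun q => Q₁ q + Q₂ q := funext hf
  have hgeq : g = fun q => Q₁ q + Q₂ (1 - q) := funext hg
  have hIff : IntervalIntegrable f volume p 1 := hfeq ▸ (I1.add I2)
  have hIgg : IntervalIntegrable g volume p 1 := hgeq ▸ (I1.add I2')
  -- a.e. congruence of quantile functions on the integration interval
  have congr_ae : ∀ (Q h : ℝ → ℝ),
      volume {q : ℝ | q ∈ Set.Ioo (0:ℝ) 1 ∧ Q q ≠ h q} = 0 →
      ∀ᵐ x ∂(volume : Measure ℝ), x ∈ Set.uIoc p 1 → Q x = h x := by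
    intro Q h hnull
    rw [ae_iff]
    refine measure_mono_null ?_
      (measure_union_null hnull (measure_singleton (1:ℝ)))
    intro x hx
    simp only [Set.mem_setOf_eq, Classical.not_imp] at hx
    rcases eq_or_ne x 1 with h1 | h1
    · exact Or.inr h1
    · refine Or.inl ⟨?_, hx.2⟩
      have hxI : x ∈ Set.Ioc p 1 := Set.uIoc_of_le hp.2.le ▸ hx.1
      exact ⟨lt_trans hp.1 hxI.1, lt_of_le_of_ne hxI.2 h1⟩
  have hae_u := congr_ae QSu f aeu
  have hae_l := congr_ae QSl g ael
  have s1 : (∫ q in p..1, QSl q) = ∫ q in p..1, g q :=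
    intervalIntegral.integral_congr_ae hae_l
  have s2 : ∀ K : ℝ, (∫ q in p..1, (QSu q - K)) = (∫ q in p..1, f q) - (1 - p) * K := by
    intro K
    have h1 : (∫ q in p..1, (QSu q - K)) = ∫ q in p..1, (f q - K) :=
      intervalIntegral.integral_congr_ae (hae_u.mono fun x hx hxm => by rw [hx hxm])
    rw [h1, intervalIntegral.integral_sub hIff (intervalIntegrable_const),
      intervalIntegral.integral_const, smul_eq_mul]
  have s3 : ∀ K : ℝ, (∫ q in p..1, (Q₂ q - K)) = (∫ q in p..1, Q₂ q) - (1 - p) * K := by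
    intro K
    rw [intervalIntegral.integral_sub I2 (intervalIntegrable_const),
      intervalIntegral.integral_const, smul_eq_mul]
  simp only [s1]
  rw [s2 ((1 / (1 - p)) * ∫ q in p..1, g q),
    s3 ((1 / (1 - p)) * ∫ q in (0:ℝ)..(1 - p), Q₂ q)]
  have hIf : (∫ q in p..1, f q) = (∫ q in p..1, Q₁ q) + ∫ q in p..1, Q₂ q := by
    rw [intervalIntegral.integral_congr (g := fun q => Q₁ q + Q₂ q) (fun x _ => hf x)]
    exact intervalIntegral.integral_add I1 I2
  have hIg : (∫ q in p..1, g q) =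
      (∫ q in p..1, Q₁ q) + ∫ q in p..1, Q₂ (1 - q) := by
    rw [intervalIntegral.integral_congr (g := fun q => Q₁ q + Q₂ (1 - q)) (fun x _ => hg x)]
    exact intervalIntegral.integral_add I1 I2'
  have hsub : (∫ q in p..1, Q₂ (1 - q)) = ∫ q in (0:ℝ)..(1 - p), Q₂ q := by
    simp
  rw [hIf, hIg, hsub]
  field_simp
  ring
end

section
/- Let S^l = g(U) with g(u) = F_{X_1}^{-1}(u) + F_{X_2}^{-1}(1-u), U uniform on (0,1), and fix x ∈ ℝ. Suppose there exists u* ∈ (0,1) such that g(u) ≤ x for all u ∈ (0, u*) and g(u) ≥ x for all u ∈ (u*, 1), with g continuous at u*. Then E[(S^l - x)_+] = π_{X_1}(F_{X_1}^{-1}(u*)) - λ_{X_2}(F_{X_2}^{-1}(1-u*)), where π and λ are the upper and lower tail transforms. -/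
open MeasureTheory Set Filter Topology

set_option linter.unusedSectionVars false

section Helpers

variable {Ω : Type*} [MeasurableSpace Ω] {μ : Measure Ω} [IsProbabilityMeasure μ]
variable {X : Ω → ℝ} {F Q : ℝ → ℝ}

lemma cdf_mono (hF : ∀ y, F y = (μ {ω | X ω ≤ y}).toReal) : Monotone F := by
  intro a b hab
  rw [hF a, hF b]
  exact ENNReal.toReal_mono (measure_ne_top _ _) (measure_mono fun ω h => h.trans hab)

lemma cdf_nonneg (hF : ∀ y, F y = (μ {ω | X ω ≤ y}).toReal) (y : ℝ) : 0 ≤ F y := by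
  rw [hF]; exact ENNReal.toReal_nonneg

lemma cdf_le_one (hF : ∀ y, F y = (μ {ω | X ω ≤ y}).toReal) (y : ℝ) : F y ≤ 1 := by
  rw [hF]
  have h : μ {ω | X ω ≤ y} ≤ 1 := prob_le_one
  simpa using ENNReal.toReal_mono ENNReal.one_ne_top h

lemma level_nonempty (hX : Measurable X) (hF : ∀ y, F y = (μ {ω | X ω ≤ y}).toReal)
    {p : ℝ} (hp : p < 1) : {x : ℝ | p ≤ F x}.Nonempty := by
  rcases le_or_gt p 0 with h0 | h0
  · exact ⟨0, h0.trans (cdf_nonneg hF 0)⟩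
  · have hmono : Monotone (fun n : ℕ => {ω | X ω ≤ (n : ℝ)}) := by
      intro n m hnm ω h
      simp only [mem_setOf_eq] at h ⊢
      exact h.trans (Nat.cast_le.mpr hnm)
    have hU : (⋃ n : ℕ, {ω | X ω ≤ (n : ℝ)}) = univ := by
      ext ω
      simp only [mem_iUnion, mem_univ, iff_true, mem_setOf_eq]
      exact exists_nat_ge (X ω)
    have ht := tendsto_measure_iUnion_atTop (μ := μ)
      (s := fun n : ℕ => {ω | X ω ≤ (n : ℝ)}) hmono
    rw [hU, measure_univ] at ht
    have hlt : ENNReal.ofReal p < 1 := ENNReal.ofReal_lt_one.mpr hp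
    obtain ⟨n, hn⟩ := (ht.eventually (eventually_gt_nhds hlt)).exists
    refine ⟨(n : ℝ), ?_⟩
    rw [mem_setOf_eq, hF]
    exact le_of_lt ((ENNReal.ofReal_lt_iff_lt_toReal h0.le (measure_ne_top _ _)).mp hn)

lemma level_bddBelow (hX : Measurable X) (hF : ∀ y, F y = (μ {ω | X ω ≤ y}).toReal)
    {p : ℝ} (hp : 0 < p) : BddBelow {x : ℝ | p ≤ F x} := by
  have hanti : Antitone (fun n : ℕ => {ω | X ω ≤ -(n : ℝ)}) := by
    intro n m hnm ω h
    simp only [mem_setOf_eq] at h ⊢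
    exact h.trans (neg_le_neg (Nat.cast_le.mpr hnm))
  have hI : (⋂ n : ℕ, {ω | X ω ≤ -(n : ℝ)}) = (∅ : Set Ω) := by
    ext ω
    simp only [mem_iInter, mem_setOf_eq, mem_empty_iff_false, iff_false]
    push_neg
    obtain ⟨n, hn⟩ := exists_nat_gt (-X ω)
    exact ⟨n, by linarith⟩
  have ht := tendsto_measure_iInter_atTop (μ := μ)
    (s := fun n : ℕ => {ω | X ω ≤ -(n : ℝ)})
    (fun n => (hX measurableSet_Iic).nullMeasurableSet) hanti ⟨0, measure_ne_top _ _⟩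
  rw [hI, measure_empty] at ht
  have hpos : (0 : ENNReal) < ENNReal.ofReal p := ENNReal.ofReal_pos.mpr hp
  obtain ⟨n, hn⟩ := (ht.eventually (eventually_lt_nhds hpos)).exists
  refine ⟨-(n : ℝ), fun z hz => ?_⟩
  by_contra hzn
  push_neg at hzn
  have h1 : F z ≤ F (-(n : ℝ)) := cdf_mono hF hzn.le
  have h2 : F (-(n : ℝ)) < p := by
    rw [hF]; exact ENNReal.toReal_lt_of_lt_ofReal hn
  have : p ≤ F z := hz
  linarith

lemma quant_galois (hX : Measurable X) (hF : ∀ y, F y = (μ {ω | X ω ≤ y}).toReal)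
    (hQ : ∀ p, Q p = sInf {x : ℝ | p ≤ F x})
    {p : ℝ} (hp : p ∈ Ioo (0:ℝ) 1) (y : ℝ) : Q p ≤ y ↔ p ≤ F y := by
  constructor
  · intro h
    have hz : ∀ z, y < z → p ≤ F z := by
      intro z hyz
      have hne := level_nonempty hX hF hp.2
      have hlt : sInf {x : ℝ | p ≤ F x} < z := lt_of_le_of_lt (by rw [← hQ]; exact h) hyz
      obtain ⟨s, hs, hsz⟩ := exists_lt_of_csInf_lt hne hlt
      exact le_trans hs (cdf_mono hF hsz.le)
    have hI : (⋂ n : ℕ, {ω | X ω ≤ y + 1/(n+1 : ℝ)}) = {ω | X ω ≤ y} := by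
      ext ω
      simp only [mem_iInter, mem_setOf_eq]
      constructor
      · intro h'
        have hlim : Tendsto (fun n : ℕ => y + 1/(n+1 : ℝ)) atTop (𝓝 y) := by
          have h0 : Tendsto (fun n : ℕ => 1 / ((n : ℝ) + 1)) atTop (𝓝 0) :=
            tendsto_one_div_add_atTop_nhds_zero_nat
          simpa using tendsto_const_nhds.add h0
        exact ge_of_tendsto' hlim h'
      · intro h' n
        have : (0:ℝ) < 1/(n+1 : ℝ) := by positivity
        linarith
    have hanti : Antitone (fun n : ℕ => {ω | X ω ≤ y + 1/(n+1 : ℝ)}) := by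
      intro n m hnm ω h
      have h1 : 1/((m:ℝ)+1) ≤ 1/((n:ℝ)+1) := by
        apply one_div_le_one_div_of_le (by positivity)
        have : (n:ℝ) ≤ m := by exact_mod_cast hnm
        linarith
      simp only [mem_setOf_eq] at h ⊢
      linarith
    have ht := tendsto_measure_iInter_atTop (μ := μ)
      (s := fun n : ℕ => {ω | X ω ≤ y + 1/(n+1 : ℝ)})
      (fun n => (hX measurableSet_Iic).nullMeasurableSet) hanti ⟨0, measure_ne_top _ _⟩
    rw [hI] at ht
    have hall : ∀ n : ℕ, ENNReal.ofReal p ≤ μ {ω | X ω ≤ y + 1/(n+1 : ℝ)} := by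
      intro n
      have hy : p ≤ F (y + 1/(n+1 : ℝ)) := by
        apply hz
        have h0 : (0:ℝ) < 1/(n+1:ℝ) := by positivity
        linarith
      rw [hF] at hy
      exact ENNReal.ofReal_le_of_le_toReal hy
    have hle := ge_of_tendsto' ht hall
    rw [hF]
    exact (ENNReal.ofReal_le_iff_le_toReal (measure_ne_top _ _)).mp hle
  · intro h
    rw [hQ]
    exact csInf_le (level_bddBelow hX hF hp.1) h

lemma quant_monoOn (hX : Measurable X) (hF : ∀ y, F y = (μ {ω | X ω ≤ y}).toReal)
    (hQ : ∀ p, Q p = sInf {x : ℝ | p ≤ F x}) : MonotoneOn Q (Ioo (0:ℝ) 1) := by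
  intro p hp q hq hpq
  have hq' : q ≤ F (Q q) := (quant_galois hX hF hQ hq (Q q)).mp le_rfl
  exact (quant_galois hX hF hQ hp (Q q)).mpr (hpq.trans hq')


lemma meas_gt (hX : Measurable X) (hF : ∀ y, F y = (μ {ω | X ω ≤ y}).toReal)
    (hQ : ∀ p, Q p = sInf {x : ℝ | p ≤ F x}) (y : ℝ) :
    volume {p : ℝ | p ∈ Ioo (0:ℝ) 1 ∧ y < Q p} = μ {ω | y < X ω} := by
  have hset : {p : ℝ | p ∈ Ioo (0:ℝ) 1 ∧ y < Q p} = Ioo (F y) 1 := by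
    ext p
    simp only [mem_setOf_eq, mem_Ioo]
    constructor
    · rintro ⟨⟨hp0, hp1⟩, hy⟩
      refine ⟨?_, hp1⟩
      by_contra hc
      push_neg at hc
      exact absurd ((quant_galois hX hF hQ ⟨hp0, hp1⟩ y).mpr hc) (not_le.mpr hy)
    · rintro ⟨hFy, hp1⟩
      have hp0 : 0 < p := lt_of_le_of_lt (cdf_nonneg hF y) hFy
      refine ⟨⟨hp0, hp1⟩, ?_⟩
      by_contra hc
      push_neg at hc
      exact absurd ((quant_galois hX hF hQ ⟨hp0, hp1⟩ y).mp hc) (not_le.mpr hFy)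
  rw [hset, Real.volume_Ioo]
  have hc : {ω | y < X ω} = {ω | X ω ≤ y}ᶜ := by ext ω; simp [not_le]
  rw [hc, measure_compl (show MeasurableSet {ω | X ω ≤ y} from hX measurableSet_Iic) (measure_ne_top _ _), measure_univ]
  rw [ENNReal.ofReal_sub _ (cdf_nonneg hF y), ENNReal.ofReal_one, hF,
    ENNReal.ofReal_toReal (measure_ne_top _ _)]

lemma meas_lt (hX : Measurable X) (hF : ∀ y, F y = (μ {ω | X ω ≤ y}).toReal)
    (hQ : ∀ p, Q p = sInf {x : ℝ | p ≤ F x}) (y : ℝ) :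
    volume {p : ℝ | p ∈ Ioo (0:ℝ) 1 ∧ Q p < y} = μ {ω | X ω < y} := by
  set m := μ {ω | X ω < y} with hm
  set L := m.toReal with hL
  have hm1 : m ≤ 1 := prob_le_one
  have hL1 : L ≤ 1 := by
    have := ENNReal.toReal_mono ENNReal.one_ne_top hm1
    simpa using this
  have hL0 : 0 ≤ L := ENNReal.toReal_nonneg
  have hmL : ENNReal.ofReal L = m := ENNReal.ofReal_toReal (measure_ne_top _ _)
  have hsub1 : {p : ℝ | p ∈ Ioo (0:ℝ) 1 ∧ Q p < y} ⊆ Ioc 0 L := by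
    rintro p ⟨⟨hp0, hp1⟩, hQp⟩
    refine ⟨hp0, ?_⟩
    have hne := level_nonempty hX hF hp1
    have hlt : sInf {x : ℝ | p ≤ F x} < y := by rw [← hQ]; exact hQp
    obtain ⟨s, hs, hsy⟩ := exists_lt_of_csInf_lt hne hlt
    have h1 : p ≤ (μ {ω | X ω ≤ s}).toReal := by rw [← hF]; exact hs
    refine h1.trans (ENNReal.toReal_mono (measure_ne_top _ _) (measure_mono ?_))
    exact fun ω h => lt_of_le_of_lt h hsy
  have hsub2 : Ioo 0 L ⊆ {p : ℝ | p ∈ Ioo (0:ℝ) 1 ∧ Q p < y} := by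
    rintro p ⟨hp0, hpL⟩
    have hp1 : p < 1 := lt_of_lt_of_le hpL hL1
    refine ⟨⟨hp0, hp1⟩, ?_⟩
    have hmono : Monotone (fun n : ℕ => {ω | X ω ≤ y - 1/(n+1 : ℝ)}) := by
      intro n m' hnm ω h
      simp only [mem_setOf_eq] at h ⊢
      have h1 : 1/((m':ℝ)+1) ≤ 1/((n:ℝ)+1) := by
        apply one_div_le_one_div_of_le (by positivity)
        have : (n:ℝ) ≤ m' := Nat.cast_le.mpr hnm
        linarith
      linarith
    have hU : (⋃ n : ℕ, {ω | X ω ≤ y - 1/(n+1 : ℝ)}) = {ω | X ω < y} := by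
      ext ω
      simp only [mem_iUnion, mem_setOf_eq]
      constructor
      · rintro ⟨n, hn⟩
        have h0 : (0:ℝ) < 1/(n+1:ℝ) := by positivity
        linarith
      · intro h'
        obtain ⟨n, hn⟩ := exists_nat_one_div_lt (show (0:ℝ) < y - X ω by linarith)
        exact ⟨n, by linarith⟩
    have ht := tendsto_measure_iUnion_atTop (μ := μ)
      (s := fun n : ℕ => {ω | X ω ≤ y - 1/(n+1 : ℝ)}) hmono
    rw [hU, ← hm] at ht
    have hplt : ENNReal.ofReal p < m := by
      rw [← hmL]
      exact (ENNReal.ofReal_lt_ofReal_iff_of_nonneg hp0.le).mpr hpL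
    obtain ⟨n, hn⟩ := (ht.eventually (eventually_gt_nhds hplt)).exists
    have hpF : p ≤ F (y - 1/(n+1 : ℝ)) := by
      rw [hF]
      exact le_of_lt ((ENNReal.ofReal_lt_iff_lt_toReal hp0.le (measure_ne_top _ _)).mp hn)
    have := (quant_galois hX hF hQ ⟨hp0, hp1⟩ (y - 1/(n+1 : ℝ))).mpr hpF
    have h0 : (0:ℝ) < 1/(n+1:ℝ) := by positivity
    linarith
  have h1 := measure_mono (μ := (volume : Measure ℝ)) hsub1
  have h2 := measure_mono (μ := (volume : Measure ℝ)) hsub2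
  rw [Real.volume_Ioc] at h1
  rw [Real.volume_Ioo] at h2
  rw [sub_zero] at h1 h2
  rw [hmL] at h1 h2
  exact le_antisymm h1 h2


lemma upper_transform (hX : Measurable X) (hXi : Integrable X μ)
    (hF : ∀ y, F y = (μ {ω | X ω ≤ y}).toReal)
    (hQ : ∀ p, Q p = sInf {x : ℝ | p ≤ F x}) (c : ℝ) :
    (∫ ω, max (X ω - c) 0 ∂μ = ∫ p in Ioo (0:ℝ) 1, max (Q p - c) 0) ∧
      Integrable (fun p => max (Q p - c) 0) (volume.restrict (Ioo (0:ℝ) 1)) := by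
  have hfi : Integrable (fun ω => max (X ω - c) 0) μ := (hXi.sub (integrable_const c)).pos_part
  have hQm : AEMeasurable Q (volume.restrict (Ioo (0:ℝ) 1)) :=
    aemeasurable_restrict_of_monotoneOn measurableSet_Ioo (quant_monoOn hX hF hQ)
  have hhm : AEMeasurable (fun p => max (Q p - c) 0) (volume.restrict (Ioo (0:ℝ) 1)) :=
    (hQm.sub aemeasurable_const).max aemeasurable_const
  have key1 := lintegral_eq_lintegral_meas_lt μ (f := fun ω => max (X ω - c) 0)
    (Eventually.of_forall fun ω => le_max_right _ _) hfi.aemeasurable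
  have key2 := lintegral_eq_lintegral_meas_lt (volume.restrict (Ioo (0:ℝ) 1))
    (f := fun p => max (Q p - c) 0)
    (Eventually.of_forall fun p => le_max_right _ _) hhm
  have hpt : ∀ t ∈ Ioi (0:ℝ),
      (volume.restrict (Ioo (0:ℝ) 1)) {p | t < max (Q p - c) 0}
        = μ {ω | t < max (X ω - c) 0} := by
    intro t ht
    simp only [mem_Ioi] at ht
    rw [Measure.restrict_apply' measurableSet_Ioo]
    have hs1 : {p | t < max (Q p - c) 0} ∩ Ioo (0:ℝ) 1
        = {p : ℝ | p ∈ Ioo (0:ℝ) 1 ∧ (c + t) < Q p} := by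
      ext p
      simp only [mem_inter_iff, mem_setOf_eq, lt_max_iff]
      constructor
      · rintro ⟨h1 | h1, h2⟩
        · exact ⟨h2, by linarith⟩
        · linarith
      · rintro ⟨h1, h2⟩
        exact ⟨Or.inl (by linarith), h1⟩
    have hs2 : {ω | t < max (X ω - c) 0} = {ω | (c + t) < X ω} := by
      ext ω
      simp only [mem_setOf_eq, lt_max_iff]
      constructor
      · rintro (h1 | h1)
        · linarith
        · linarith
      · intro h1
        exact Or.inl (by linarith)
    rw [hs1, hs2, meas_gt hX hF hQ (c + t)]
  have keyt : ∫⁻ t in Ioi (0:ℝ), (volume.restrict (Ioo (0:ℝ) 1)) {p | t < max (Q p - c) 0}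
      = ∫⁻ t in Ioi (0:ℝ), μ {ω | t < max (X ω - c) 0} :=
    setLIntegral_congr_fun measurableSet_Ioi (fun t ht => hpt t ht)
  have hmain : ∫⁻ ω, ENNReal.ofReal (max (X ω - c) 0) ∂μ
      = ∫⁻ p in Ioo (0:ℝ) 1, ENNReal.ofReal (max (Q p - c) 0) := by
    rw [key1, key2, keyt]
  have hfin : (∫⁻ p in Ioo (0:ℝ) 1, ENNReal.ofReal (max (Q p - c) 0)) < ⊤ := by
    rw [← hmain]
    exact hfi.lintegral_lt_top
  have hint : Integrable (fun p => max (Q p - c) 0) (volume.restrict (Ioo (0:ℝ) 1)) := by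
    refine ⟨hhm.aestronglyMeasurable, ?_⟩
    rw [hasFiniteIntegral_iff_ofReal (f := fun p => max (Q p - c) 0)
      (Eventually.of_forall fun p => le_max_right _ _)]
    exact hfin
  refine ⟨?_, hint⟩
  rw [integral_eq_lintegral_of_nonneg_ae (f := fun ω => max (X ω - c) 0)
      (Eventually.of_forall fun ω => le_max_right _ _) hfi.aestronglyMeasurable,
    integral_eq_lintegral_of_nonneg_ae (f := fun p => max (Q p - c) 0)
      (Eventually.of_forall fun p => le_max_right _ _) hhm.aestronglyMeasurable, hmain]

lemma lower_transform (hX : Measurable X) (hXi : Integrable X μ)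
    (hF : ∀ y, F y = (μ {ω | X ω ≤ y}).toReal)
    (hQ : ∀ p, Q p = sInf {x : ℝ | p ≤ F x}) (c : ℝ) :
    (∫ ω, max (c - X ω) 0 ∂μ = ∫ p in Ioo (0:ℝ) 1, max (c - Q p) 0) ∧
      Integrable (fun p => max (c - Q p) 0) (volume.restrict (Ioo (0:ℝ) 1)) := by
  have hfi : Integrable (fun ω => max (c - X ω) 0) μ := ((integrable_const c).sub hXi).pos_part
  have hQm : AEMeasurable Q (volume.restrict (Ioo (0:ℝ) 1)) :=
    aemeasurable_restrict_of_monotoneOn measurableSet_Ioo (quant_monoOn hX hF hQ)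
  have hhm : AEMeasurable (fun p => max (c - Q p) 0) (volume.restrict (Ioo (0:ℝ) 1)) :=
    ((aemeasurable_const.sub hQm).max aemeasurable_const)
  have key1 := lintegral_eq_lintegral_meas_lt μ (f := fun ω => max (c - X ω) 0)
    (Eventually.of_forall fun ω => le_max_right _ _) hfi.aemeasurable
  have key2 := lintegral_eq_lintegral_meas_lt (volume.restrict (Ioo (0:ℝ) 1))
    (f := fun p => max (c - Q p) 0)
    (Eventually.of_forall fun p => le_max_right _ _) hhm
  have hpt : ∀ t ∈ Ioi (0:ℝ),
      (volume.restrict (Ioo (0:ℝ) 1)) {p | t < max (c - Q p) 0}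
        = μ {ω | t < max (c - X ω) 0} := by
    intro t ht
    simp only [mem_Ioi] at ht
    rw [Measure.restrict_apply' measurableSet_Ioo]
    have hs1 : {p | t < max (c - Q p) 0} ∩ Ioo (0:ℝ) 1
        = {p : ℝ | p ∈ Ioo (0:ℝ) 1 ∧ Q p < (c - t)} := by
      ext p
      simp only [mem_inter_iff, mem_setOf_eq, lt_max_iff]
      constructor
      · rintro ⟨h1 | h1, h2⟩
        · exact ⟨h2, by linarith⟩
        · linarith
      · rintro ⟨h1, h2⟩
        exact ⟨Or.inl (by linarith), h1⟩
    have hs2 : {ω | t < max (c - X ω) 0} = {ω | X ω < (c - t)} := by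
      ext ω
      simp only [mem_setOf_eq, lt_max_iff]
      constructor
      · rintro (h1 | h1)
        · linarith
        · linarith
      · intro h1
        exact Or.inl (by linarith)
    rw [hs1, hs2, meas_lt hX hF hQ (c - t)]
  have keyt : ∫⁻ t in Ioi (0:ℝ), (volume.restrict (Ioo (0:ℝ) 1)) {p | t < max (c - Q p) 0}
      = ∫⁻ t in Ioi (0:ℝ), μ {ω | t < max (c - X ω) 0} :=
    setLIntegral_congr_fun measurableSet_Ioi (fun t ht => hpt t ht)
  have hmain : ∫⁻ ω, ENNReal.ofReal (max (c - X ω) 0) ∂μ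
      = ∫⁻ p in Ioo (0:ℝ) 1, ENNReal.ofReal (max (c - Q p) 0) := by
    rw [key1, key2, keyt]
  have hfin : (∫⁻ p in Ioo (0:ℝ) 1, ENNReal.ofReal (max (c - Q p) 0)) < ⊤ := by
    rw [← hmain]
    exact hfi.lintegral_lt_top
  have hint : Integrable (fun p => max (c - Q p) 0) (volume.restrict (Ioo (0:ℝ) 1)) := by
    refine ⟨hhm.aestronglyMeasurable, ?_⟩
    rw [hasFiniteIntegral_iff_ofReal (f := fun p => max (c - Q p) 0)
      (Eventually.of_forall fun p => le_max_right _ _)]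
    exact hfin
  refine ⟨?_, hint⟩
  rw [integral_eq_lintegral_of_nonneg_ae (f := fun ω => max (c - X ω) 0)
      (Eventually.of_forall fun ω => le_max_right _ _) hfi.aestronglyMeasurable,
    integral_eq_lintegral_of_nonneg_ae (f := fun p => max (c - Q p) 0)
      (Eventually.of_forall fun p => le_max_right _ _) hhm.aestronglyMeasurable, hmain]

end Helpers

open MeasureTheory

/-- Single-crossing stop-loss decomposition: if `g ≤ x` on `(0,u*)`, `g ≥ x` on `(u*,1)`
and `g` is continuous at `u*`, then
`E[(Sˡ - x)_+] = π_{X₁}(F₁⁻¹(u*)) - λ_{X₂}(F₂⁻¹(1-u*))`. -/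
theorem stoploss_single_crossing_decomposition {Ω₁ Ω₂ : Type*}
    [MeasurableSpace Ω₁] [MeasurableSpace Ω₂]
    (μ₁ : Measure Ω₁) (μ₂ : Measure Ω₂)
    [IsProbabilityMeasure μ₁] [IsProbabilityMeasure μ₂]
    (X₁ : Ω₁ → ℝ) (hX₁ : Integrable X₁ μ₁)
    (X₂ : Ω₂ → ℝ) (hX₂ : Integrable X₂ μ₂)
    (F₁ F₂ Q₁ Q₂ : ℝ → ℝ)
    (hF₁ : ∀ y, F₁ y = (μ₁ {ω | X₁ ω ≤ y}).toReal)
    (hF₂ : ∀ y, F₂ y = (μ₂ {ω | X₂ ω ≤ y}).toReal)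
    (hQ₁ : ∀ p, Q₁ p = sInf {x : ℝ | p ≤ F₁ x})
    (hQ₂ : ∀ p, Q₂ p = sInf {x : ℝ | p ≤ F₂ x})
    (g : ℝ → ℝ) (hg : ∀ u, g u = Q₁ u + Q₂ (1 - u))
    (x ustar : ℝ) (hu : ustar ∈ Set.Ioo (0:ℝ) 1)
    (hle : ∀ u ∈ Set.Ioo (0:ℝ) ustar, g u ≤ x)
    (hge : ∀ u ∈ Set.Ioo ustar (1:ℝ), x ≤ g u)
    (hcont : ContinuousAt g ustar) :
    ∫ u in Set.Ioo (0:ℝ) 1, max (g u - x) 0 =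
      (∫ ω, max (X₁ ω - Q₁ ustar) 0 ∂μ₁) -
        ∫ ω, max (Q₂ (1 - ustar) - X₂ ω) 0 ∂μ₂ := by
  classical
  -- measurable representatives
  obtain ⟨Y₁, hY₁m, hae₁⟩ : ∃ Y, Measurable Y ∧ X₁ =ᵐ[μ₁] Y :=
    ⟨hX₁.aemeasurable.mk X₁, hX₁.aemeasurable.measurable_mk, hX₁.aemeasurable.ae_eq_mk⟩
  obtain ⟨Y₂, hY₂m, hae₂⟩ : ∃ Y, Measurable Y ∧ X₂ =ᵐ[μ₂] Y :=
    ⟨hX₂.aemeasurable.mk X₂, hX₂.aemeasurable.measurable_mk, hX₂.aemeasurable.ae_eq_mk⟩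
  have hF₁' : ∀ y, F₁ y = (μ₁ {ω | Y₁ ω ≤ y}).toReal := by
    intro y
    rw [hF₁ y]
    congr 1
    apply measure_congr
    filter_upwards [hae₁] with ω h
    exact congrArg (fun z => z ≤ y) h
  have hF₂' : ∀ y, F₂ y = (μ₂ {ω | Y₂ ω ≤ y}).toReal := by
    intro y
    rw [hF₂ y]
    congr 1
    apply measure_congr
    filter_upwards [hae₂] with ω h
    exact congrArg (fun z => z ≤ y) h
  have hI₁ : Integrable Y₁ μ₁ := hX₁.congr hae₁
  have hI₂ : Integrable Y₂ μ₂ := hX₂.congr hae₂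
  have h1ustar : (1 - ustar) ∈ Set.Ioo (0:ℝ) 1 := ⟨by linarith [hu.2], by linarith [hu.1]⟩
  -- continuity gives g u* = x
  have gstar : g ustar = x := by
    haveI hne1 : (𝓝[Set.Ioo (0:ℝ) ustar] ustar).NeBot := by
      rw [← mem_closure_iff_nhdsWithin_neBot, closure_Ioo (ne_of_lt hu.1)]
      exact ⟨hu.1.le, le_rfl⟩
    haveI hne2 : (𝓝[Set.Ioo ustar (1:ℝ)] ustar).NeBot := by
      rw [← mem_closure_iff_nhdsWithin_neBot, closure_Ioo (ne_of_lt hu.2)]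
      exact ⟨le_rfl, hu.2.le⟩
    have h1 : g ustar ≤ x :=
      le_of_tendsto (hcont.mono_left nhdsWithin_le_nhds)
        (eventually_nhdsWithin_of_forall hle)
    have h2 : x ≤ g ustar :=
      ge_of_tendsto (hcont.mono_left nhdsWithin_le_nhds)
        (eventually_nhdsWithin_of_forall hge)
    linarith
  have hmono₁ : MonotoneOn Q₁ (Set.Ioo (0:ℝ) 1) := quant_monoOn hY₁m hF₁' hQ₁
  have hmono₂ : MonotoneOn Q₂ (Set.Ioo (0:ℝ) 1) := quant_monoOn hY₂m hF₂' hQ₂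
  have hup := upper_transform hY₁m hI₁ hF₁' hQ₁ (Q₁ ustar)
  have hlo := lower_transform hY₂m hI₂ hF₂' hQ₂ (Q₂ (1 - ustar))
  have hxsum : Q₁ ustar + Q₂ (1 - ustar) = x := by rw [← gstar, hg]
  -- pointwise identity on (0,1)
  have hpw : ∀ u ∈ Set.Ioo (0:ℝ) 1, max (g u - x) 0
      = max (Q₁ u - Q₁ ustar) 0 - max (Q₂ (1 - ustar) - Q₂ (1 - u)) 0 := by
    intro u hu'
    have hgu : g u = Q₁ u + Q₂ (1 - u) := hg u
    have hu1 : (1 - u) ∈ Set.Ioo (0:ℝ) 1 := ⟨by linarith [hu'.2], by linarith [hu'.1]⟩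
    rcases lt_trichotomy u ustar with hlt' | heq | hgt'
    · have hx : g u ≤ x := hle u ⟨hu'.1, hlt'⟩
      have ha : Q₁ u ≤ Q₁ ustar := hmono₁ hu' hu hlt'.le
      have hb : Q₂ (1 - ustar) ≤ Q₂ (1 - u) := hmono₂ h1ustar hu1 (by linarith)
      rw [max_eq_right (by linarith), max_eq_right (by linarith), max_eq_right (by linarith)]
      ring
    · subst heq
      rw [gstar]
      simp
    · have hx : x ≤ g u := hge u ⟨hgt', hu'.2⟩
      have ha : Q₁ ustar ≤ Q₁ u := hmono₁ hu hu' hgt'.le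
      have hb : Q₂ (1 - u) ≤ Q₂ (1 - ustar) := hmono₂ hu1 h1ustar (by linarith)
      rw [max_eq_left (by linarith), max_eq_left (by linarith), max_eq_left (by linarith)]
      linarith
  -- the reflection u ↦ 1 - u preserves Lebesgue measure on (0,1)
  have hmp : MeasurePreserving (fun u : ℝ => 1 - u) volume volume :=
    Measure.measurePreserving_sub_left volume 1
  have hemb : MeasurableEmbedding (fun u : ℝ => 1 - u) := by
    refine MeasurableEquiv.measurableEmbedding
      ⟨Equiv.subLeft (1:ℝ), ?_, ?_⟩
    · exact (measurable_const.sub measurable_id : Measurable fun u : ℝ => 1 - u)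
    · have h : ((Equiv.subLeft (1:ℝ)).symm : ℝ → ℝ) = fun b => 1 - b := by
        funext b
        simp [Equiv.subLeft, sub_eq_add_neg, add_comm]
      rw [h]
      exact measurable_const.sub measurable_id
  have hpre : (fun u : ℝ => 1 - u) ⁻¹' (Set.Ioo (0:ℝ) 1) = Set.Ioo (0:ℝ) 1 := by
    ext u
    simp only [Set.mem_preimage, Set.mem_Ioo]
    constructor <;> rintro ⟨h1, h2⟩ <;> exact ⟨by linarith, by linarith⟩
  have hBint : Integrable (fun u : ℝ => max (Q₂ (1 - ustar) - Q₂ (1 - u)) 0)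
      (volume.restrict (Set.Ioo (0:ℝ) 1)) := by
    have h := (hmp.integrableOn_comp_preimage hemb
      (f := fun p => max (Q₂ (1 - ustar) - Q₂ p) 0) (s := Set.Ioo (0:ℝ) 1)).mpr hlo.2
    rw [hpre] at h
    exact h
  have hBeq : ∫ u in Set.Ioo (0:ℝ) 1, max (Q₂ (1 - ustar) - Q₂ (1 - u)) 0
      = ∫ p in Set.Ioo (0:ℝ) 1, max (Q₂ (1 - ustar) - Q₂ p) 0 := by
    have h := hmp.setIntegral_preimage_emb hemb
      (fun p => max (Q₂ (1 - ustar) - Q₂ p) 0) (Set.Ioo (0:ℝ) 1)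
    rw [hpre] at h
    exact h
  have hE₁ : ∫ ω, max (X₁ ω - Q₁ ustar) 0 ∂μ₁ = ∫ ω, max (Y₁ ω - Q₁ ustar) 0 ∂μ₁ := by
    apply integral_congr_ae
    filter_upwards [hae₁] with ω h
    rw [h]
  have hE₂ : ∫ ω, max (Q₂ (1 - ustar) - X₂ ω) 0 ∂μ₂
      = ∫ ω, max (Q₂ (1 - ustar) - Y₂ ω) 0 ∂μ₂ := by
    apply integral_congr_ae
    filter_upwards [hae₂] with ω h
    rw [h]
  calc ∫ u in Set.Ioo (0:ℝ) 1, max (g u - x) 0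
      = ∫ u in Set.Ioo (0:ℝ) 1,
          (max (Q₁ u - Q₁ ustar) 0 - max (Q₂ (1 - ustar) - Q₂ (1 - u)) 0) :=
        setIntegral_congr_fun measurableSet_Ioo (fun u hu' => hpw u hu')
    _ = (∫ u in Set.Ioo (0:ℝ) 1, max (Q₁ u - Q₁ ustar) 0)
          - ∫ u in Set.Ioo (0:ℝ) 1, max (Q₂ (1 - ustar) - Q₂ (1 - u)) 0 :=
        integral_sub hup.2 hBint
    _ = (∫ ω, max (X₁ ω - Q₁ ustar) 0 ∂μ₁) - ∫ ω, max (Q₂ (1 - ustar) - X₂ ω) 0 ∂μ₂ := by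
        rw [hBeq, ← hup.1, ← hlo.1, hE₁, hE₂]
end
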